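/- For all real numbers q₁, q₂, p₁, p₂, λ, μ, the determinant of the matrix L - μ·I, where L = [[-p₂λ - q₁p₂ - p₁, λ² + q₁λ + q₂],[λ² - q₁λ - p₂² + q₁² - q₂, p₂λ + q₁p₂ + p₁]], equals -(λ⁴ + H₁λ + H₂) + μ², where H₁ = 2p₁p₂ + q₁p₂² + q₁³ - 2q₁q₂ and H₂ = p₁² + 2q₁p₁p₂ + (q₁² - q₂)p₂² + q₁²q₂ - q₂². -/
import Mathlib

/-- The characteristic equation of the n = 2 Stäckel Lax matrix reproduces the
separation curve: `det(L - μI) = -(λ⁴ + H₁λ + H₂) + μ²`. -/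
theorem char_eq_n2 (q₁ q₂ p₁ p₂ lam mu : ℝ) :
    ((!![-p₂ * lam - q₁ * p₂ - p₁, lam ^ 2 + q₁ * lam + q₂;
         lam ^ 2 - q₁ * lam - p₂ ^ 2 + q₁ ^ 2 - q₂, p₂ * lam + q₁ * p₂ + p₁] :
        Matrix (Fin 2) (Fin 2) ℝ) - mu • (1 : Matrix (Fin 2) (Fin 2) ℝ)).det
      = -(lam ^ 4 + (2 * p₁ * p₂ + q₁ * p₂ ^ 2 + q₁ ^ 3 - 2 * q₁ * q₂) * lam
          + (p₁ ^ 2 + 2 * q₁ * p₁ * p₂ + (q₁ ^ 2 - q₂) * p₂ ^ 2 + q₁ ^ 2 * q₂ - q₂ ^ 2))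
        + mu ^ 2 := by
  simp [Matrix.det_fin_two, Matrix.one_apply]
  ring
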